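/- arXiv:2512.12971 — 3 statements merged into one kernel-verified Lean document; each statement's English description precedes it below -/
import Mathlib

section
/- Let R be a probability measure on a measurable space Y, let J : Y → Z be a measurable map into a measurable space Z, and let h : Z → [0,∞) be measurable. Suppose P := (h ∘ J) · R (the measure with density h ∘ J with respect to R) is a probability measure. Then J_#P ≪ J_#R with d(J_#P)/d(J_#R) = h holding J_#R-almost everywhere, and KL(P ‖ R) = KL(J_#P ‖ J_#R). (This is the identity used in the paper to show that the KL divergence of a Schrödinger bridge of product form equals the KL divergence of its endpoint marginals to those of the reference measure.) -/
open MeasureTheory Classical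
open scoped NNReal ENNReal

/-! A density that factors through `J` is also a density of the pushforward by `J`, so the
log-likelihood ratio on `Y` is the pullback of the one on `Z`, and the two KL integrals agree
by change of variables. -/

/-- KL divergence: `∫ log(dμ/dν) dμ` if `μ ≪ ν`, and `+∞` otherwise. -/
noncomputable def klDiv {Y : Type*} [MeasurableSpace Y] (μ ν : Measure Y) : EReal :=
  if μ ≪ ν then ((∫ y, Real.log ((μ.rnDeriv ν y).toReal) ∂μ : ℝ) : EReal) else ⊤

section

variable {Y Z : Type*} [MeasurableSpace Y] [MeasurableSpace Z]

theorem MeasureTheory.Measure.map_withDensity_comp (μ : Measure Y) {J : Y → Z}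
    (hJ : Measurable J) {f : Z → ℝ≥0∞} (hf : Measurable f) :
    (μ.withDensity (fun y => f (J y))).map J = (μ.map J).withDensity f := by
  ext B hB
  rw [Measure.map_apply hJ hB, withDensity_apply _ (hJ hB), withDensity_apply _ hB,
    setLIntegral_map hB hf hJ]

theorem klDiv_withDensity (μ : Measure Y) [SigmaFinite μ] {f : Y → ℝ≥0∞} (hf : Measurable f) :
    klDiv (μ.withDensity f) μ = ((∫ y, Real.log (f y).toReal ∂μ.withDensity f : ℝ) : EReal) := by
  rw [klDiv, if_pos (withDensity_absolutelyContinuous μ f)]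
  congr 1
  refine integral_congr_ae ?_
  filter_upwards [(withDensity_absolutelyContinuous μ f).ae_le
    (Measure.rnDeriv_withDensity μ hf)] with y hy
  rw [hy]

end

theorem klDiv_eq_klDiv_map_of_density_factors_general
    {Y Z : Type*} [MeasurableSpace Y] [MeasurableSpace Z]
    (R : Measure Y) [IsProbabilityMeasure R]
    (J : Y → Z) (hJ : Measurable J)
    (h : Z → ℝ≥0) (hh : Measurable h)
    (P : Measure Y) (hP : P = R.withDensity (fun y => (h (J y) : ℝ≥0∞))) :
    P.map J ≪ R.map J ∧
      (P.map J).rnDeriv (R.map J) =ᵐ[R.map J] (fun z => (h z : ℝ≥0∞)) ∧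
      klDiv P R = klDiv (P.map J) (R.map J) := by
  subst hP
  have hhE : Measurable (fun z => (h z : ℝ≥0∞)) := hh.coe_nnreal_ennreal
  have hmap := Measure.map_withDensity_comp R hJ hhE
  refine ⟨hmap ▸ withDensity_absolutelyContinuous _ _,
    hmap ▸ Measure.rnDeriv_withDensity _ hhE, ?_⟩
  rw [klDiv_withDensity R (f := fun y => h (J y)) (hhE.comp hJ), hmap,
    klDiv_withDensity _ hhE, ← hmap, integral_map hJ.aemeasurable]
  exact (Real.measurable_log.comp hhE.ennreal_toReal).aestronglyMeasurable

/-- If `P = (h ∘ J) · R` is a probability measure, where `h : Z → [0,∞)` is measurable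
and `J : Y → Z` is measurable, then `J_#P ≪ J_#R` with density `h`, and
`KL(P‖R) = KL(J_#P‖J_#R)`. -/
theorem klDiv_eq_klDiv_map_of_density_factors
    {Y Z : Type*} [MeasurableSpace Y] [MeasurableSpace Z]
    (R : Measure Y) [IsProbabilityMeasure R]
    (J : Y → Z) (hJ : Measurable J)
    (h : Z → ℝ≥0) (hh : Measurable h)
    (P : Measure Y) (hP : P = R.withDensity (fun y => (h (J y) : ℝ≥0∞)))
    [IsProbabilityMeasure P] :
    P.map J ≪ R.map J ∧
      (P.map J).rnDeriv (R.map J) =ᵐ[R.map J] (fun z => (h z : ℝ≥0∞)) ∧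
      klDiv P R = klDiv (P.map J) (R.map J) :=
  klDiv_eq_klDiv_map_of_density_factors_general R J hJ h hh P hP
end

section
/- Let Ω₁ and Ω₂ be measurable spaces, Φ : Ω₁ → Ω₂ a measurable bijection with measurable inverse, R₁ a probability measure on Ω₁, and R₂ := Φ_#R₁. Let A₁ and A₂ be sets of probability measures on Ω₁ and Ω₂ respectively such that Φ_#P ∈ A₂ for every P ∈ A₁. Suppose P̂₁ ∈ A₁ satisfies KL(P̂₁‖R₁) ≤ KL(P‖R₁) for all P ∈ A₁, and P̂₂ is the unique element of A₂ attaining the minimum of Q ↦ KL(Q‖R₂) over A₂, with KL(P̂₂‖R₂) < ∞. Then KL(P̂₁‖R₁) = KL(P̂₂‖R₂) if and only if Φ_#P̂₁ = P̂₂. (This is the equivalence (i) ⇔ (ii) in the paper's KL divergence comparison theorem, stated for general constraint sets related by the bijection Φ.) -/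
/-!
Pushing forward along a measurable embedding preserves KL divergence, so
`KL(Φ_#P₁ ‖ R₂) = KL(P₁ ‖ R₁)`, and the equivalence reduces to uniqueness of the minimizer over `A₂`.
-/

open MeasureTheory Classical

namespace MeasurableEmbedding

variable {α β : Type*} [MeasurableSpace α] [MeasurableSpace β] {f : α → β}

lemma absolutelyContinuous_map_iff (hf : MeasurableEmbedding f) {μ ν : Measure α} :
    μ.map f ≪ ν.map f ↔ μ ≪ ν := by
  refine ⟨fun h ↦ Measure.AbsolutelyContinuous.mk fun s _ hνs ↦ ?_, hf.absolutelyContinuous_map⟩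
  have hfs : f ⁻¹' (f '' s) = s := hf.injective.preimage_image s
  have hνfs : ν.map f (f '' s) = 0 := by rw [hf.map_apply, hfs, hνs]
  simpa only [hf.map_apply, hfs] using h hνfs

lemma klDiv_map (hf : MeasurableEmbedding f) (μ ν : Measure α) [SigmaFinite μ] [SigmaFinite ν] :
    klDiv (μ.map f) (ν.map f) = klDiv μ ν := by
  unfold klDiv
  by_cases hμν : μ ≪ ν
  · rw [if_pos (hf.absolutelyContinuous_map hμν), if_pos hμν, hf.integral_map]
    congr 1
    refine integral_congr_ae ?_
    filter_upwards [hμν (hf.rnDeriv_map μ ν)] with x hx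
    rw [hx]
  · rw [if_neg (hf.absolutelyContinuous_map_iff.not.mpr hμν), if_neg hμν]

end MeasurableEmbedding

theorem klDiv_min_eq_iff_pushforward_eq_general
    {Ω₁ Ω₂ : Type*} [MeasurableSpace Ω₁] [MeasurableSpace Ω₂]
    (Φ : Ω₁ → Ω₂) (Ψ : Ω₂ → Ω₁)
    (hΦ : Measurable Φ) (hΨ : Measurable Ψ)
    (hleft : Function.LeftInverse Ψ Φ) (hright : Function.RightInverse Ψ Φ)
    (R₁ : Measure Ω₁) [IsProbabilityMeasure R₁]
    (R₂ : Measure Ω₂) (hR₂ : R₂ = R₁.map Φ)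
    (A₁ : Set (Measure Ω₁)) (A₂ : Set (Measure Ω₂))
    (hA₁ : ∀ P ∈ A₁, IsProbabilityMeasure P)
    (hmap : ∀ P ∈ A₁, P.map Φ ∈ A₂)
    (P₁ : Measure Ω₁) (hP₁ : P₁ ∈ A₁)
    (P₂ : Measure Ω₂)
    (huniq : ∀ Q ∈ A₂, klDiv Q R₂ = klDiv P₂ R₂ → Q = P₂) :
    klDiv P₁ R₁ = klDiv P₂ R₂ ↔ P₁.map Φ = P₂ := by
  have : IsProbabilityMeasure P₁ := hA₁ P₁ hP₁
  let e : Ω₁ ≃ᵐ Ω₂ := ⟨⟨Φ, Ψ, hleft, hright⟩, hΦ, hΨ⟩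
  have hkl : klDiv (P₁.map Φ) R₂ = klDiv P₁ R₁ := hR₂ ▸ e.measurableEmbedding.klDiv_map P₁ R₁
  exact ⟨fun h ↦ huniq _ (hmap P₁ hP₁) (hkl.trans h), fun h ↦ h ▸ hkl.symm⟩

/-- With constraint sets related by the measurable bijection `Φ`, minimizers `P₁` over
`A₁` and `P₂` over `A₂` (the latter unique with finite KL divergence), the minimal KL
divergences agree if and only if `Φ_#P₁ = P₂`. -/
theorem klDiv_min_eq_iff_pushforward_eq
    {Ω₁ Ω₂ : Type*} [MeasurableSpace Ω₁] [MeasurableSpace Ω₂]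
    (Φ : Ω₁ → Ω₂) (Ψ : Ω₂ → Ω₁)
    (hΦ : Measurable Φ) (hΨ : Measurable Ψ)
    (hleft : Function.LeftInverse Ψ Φ) (hright : Function.RightInverse Ψ Φ)
    (R₁ : Measure Ω₁) [IsProbabilityMeasure R₁]
    (R₂ : Measure Ω₂) (hR₂ : R₂ = R₁.map Φ)
    (A₁ : Set (Measure Ω₁)) (A₂ : Set (Measure Ω₂))
    (hA₁ : ∀ P ∈ A₁, IsProbabilityMeasure P)
    (hA₂ : ∀ Q ∈ A₂, IsProbabilityMeasure Q)
    (hmap : ∀ P ∈ A₁, P.map Φ ∈ A₂)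
    (P₁ : Measure Ω₁) (hP₁ : P₁ ∈ A₁)
    (hmin₁ : ∀ P ∈ A₁, klDiv P₁ R₁ ≤ klDiv P R₁)
    (P₂ : Measure Ω₂) (hP₂ : P₂ ∈ A₂)
    (hmin₂ : ∀ Q ∈ A₂, klDiv P₂ R₂ ≤ klDiv Q R₂)
    (huniq : ∀ Q ∈ A₂, klDiv Q R₂ = klDiv P₂ R₂ → Q = P₂)
    (hfin : klDiv P₂ R₂ < ⊤) :
    klDiv P₁ R₁ = klDiv P₂ R₂ ↔ P₁.map Φ = P₂ :=
  klDiv_min_eq_iff_pushforward_eq_general Φ Ψ hΦ hΨ hleft hright R₁ R₂ hR₂ A₁ A₂ hA₁ hmap P₁ hP₁ P₂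
    huniq
end

section
/- Let Ω, S, E₁, E₂ be measurable spaces, R a probability measure on Ω, A : Ω → S, B : Ω → E₁, and π : E₁ → E₂ measurable maps. Let f : S → [0,∞) be measurable with f ∘ A integrable under R, let g₂ : E₂ → [0,∞) be bounded measurable, and set g := g₂ ∘ π. Let ρ be a probability measure on E₁ with ρ ≪ B_#R. Suppose that (g ∘ B) · E_R[f ∘ A | σ(B)] = (dρ/d(B_#R)) ∘ B holds R-almost everywhere. Then (g₂ ∘ π ∘ B) · E_R[f ∘ A | σ(π ∘ B)] = (d(π_#ρ)/d((π∘B)_#R)) ∘ (π ∘ B) holds R-almost everywhere. (This is the key step in the paper's proof that a Schrödinger-system solution in Scenario (1) whose terminal function factors through the coarsening π also solves the static Schrödinger system of Scenario (2).) -/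
open MeasureTheory

/-! Write `G = g₂ ∘ π ∘ B`. Since `G` is `σ(π ∘ B)`-measurable and `σ(π ∘ B) ≤ σ(B)`, the tower
property and pulling out `G` give `G · E[f ∘ A | σ(π ∘ B)] = E[G · E[f ∘ A | σ(B)] | σ(π ∘ B)]`,
which by hypothesis is `E[(dρ/dR_B) ∘ B | σ(π ∘ B)]`. Conditioning a Radon–Nikodym density on
a coarser variable yields the density of the pushforwards: both have integral `ρ(π⁻¹ t)` over
`(π ∘ B)⁻¹ t`. -/

section RadonNikodym

variable {Ω E : Type*} {mΩ : MeasurableSpace Ω} {mE : MeasurableSpace E}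

theorem setIntegral_preimage_toReal_rnDeriv_map (R : Measure Ω) [IsFiniteMeasure R]
    {Y : Ω → E} (hY : Measurable Y) {ν : Measure E} [SigmaFinite ν] (hν : ν ≪ R.map Y)
    {t : Set E} (ht : MeasurableSet t) :
    ∫ ω in Y ⁻¹' t, (ν.rnDeriv (R.map Y) (Y ω)).toReal ∂(R) = ν.real t := by
  rw [← Measure.setIntegral_toReal_rnDeriv hν t,
    setIntegral_map ht (Measure.measurable_rnDeriv _ _).ennreal_toReal.aestronglyMeasurable
      hY.aemeasurable]

theorem integrable_toReal_rnDeriv_map_comp (R : Measure Ω) [IsFiniteMeasure R]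
    {Y : Ω → E} (hY : Measurable Y) (ν : Measure E) [IsFiniteMeasure ν] :
    Integrable (fun ω => (ν.rnDeriv (R.map Y) (Y ω)).toReal) R :=
  (integrable_map_measure (Measure.measurable_rnDeriv _ _).ennreal_toReal.aestronglyMeasurable
    hY.aemeasurable).mp Measure.integrable_toReal_rnDeriv

theorem condExp_toReal_rnDeriv_map_comp {E' : Type*} {mE' : MeasurableSpace E'}
    (R : Measure Ω) [IsFiniteMeasure R] {B : Ω → E} (hB : Measurable B) {π : E → E'}
    (hπ : Measurable π) {ρ : Measure E} [IsFiniteMeasure ρ] (hac : ρ ≪ R.map B) :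
    R[fun ω => (ρ.rnDeriv (R.map B) (B ω)).toReal | mE'.comap (π ∘ B)]
      =ᵐ[R] fun ω => ((ρ.map π).rnDeriv (R.map (π ∘ B)) (π (B ω))).toReal := by
  have hπB : Measurable (π ∘ B) := hπ.comp hB
  have hac' : ρ.map π ≪ R.map (π ∘ B) := Measure.map_map hπ hB ▸ hac.map hπ
  refine (ae_eq_condExp_of_forall_setIntegral_eq hπB.comap_le
    (integrable_toReal_rnDeriv_map_comp R hB ρ)
    (fun _ _ _ => (integrable_toReal_rnDeriv_map_comp R hπB (ρ.map π)).integrableOn)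
    ?_ ?_).symm
  · rintro _ ⟨t, ht, rfl⟩ -
    rw [setIntegral_preimage_toReal_rnDeriv_map R hπB hac' ht, Set.preimage_comp,
      setIntegral_preimage_toReal_rnDeriv_map R hB hac (hπ ht), map_measureReal_apply hπ ht]
  · exact ((Measure.measurable_rnDeriv _ _).ennreal_toReal.comp
      (comap_measurable (π ∘ B))).aestronglyMeasurable

end RadonNikodym

theorem condExp_mul_condExp_of_le {Ω : Type*} {m₂ m₁ m : MeasurableSpace Ω} {μ : Measure Ω}
    [IsFiniteMeasure μ] (hm₂₁ : m₂ ≤ m₁) (hm₁ : m₁ ≤ m) {G F : Ω → ℝ}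
    (hG : StronglyMeasurable[m₂] G) {C : ℝ} (hGC : ∀ ω, ‖G ω‖ ≤ C) (hF : Integrable F μ) :
    μ[G * μ[F | m₁] | m₂] =ᵐ[μ] G * μ[F | m₂] := by
  have hGF : Integrable (G * F) μ :=
    hF.bdd_mul (hG.mono (hm₂₁.trans hm₁)).aestronglyMeasurable (.of_forall hGC)
  calc μ[G * μ[F | m₁] | m₂]
      =ᵐ[μ] μ[μ[G * F | m₁] | m₂] :=
        condExp_congr_ae (condExp_mul_of_stronglyMeasurable_left (hG.mono hm₂₁) hGF hF).symm
    _ =ᵐ[μ] μ[G * F | m₂] := condExp_condExp_of_le hm₂₁ hm₁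
    _ =ᵐ[μ] G * μ[F | m₂] := condExp_mul_of_stronglyMeasurable_left hG hGF hF

theorem schroedinger_terminal_equation_coarsening_general
    {Ω S E₁ E₂ : Type*} {mΩ : MeasurableSpace Ω}
    {mE₁ : MeasurableSpace E₁} {mE₂ : MeasurableSpace E₂}
    (R : Measure Ω) [IsProbabilityMeasure R]
    (A : Ω → S)
    (B : Ω → E₁) (hB : Measurable B)
    (π : E₁ → E₂) (hπ : Measurable π)
    (f : S → ℝ)
    (hfint : Integrable (fun ω => f (A ω)) R)
    (g₂ : E₂ → ℝ) (hg₂ : Measurable g₂) (hg₂0 : ∀ z, 0 ≤ g₂ z)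
    (hg₂bdd : ∃ C : ℝ, ∀ z, g₂ z ≤ C)
    (ρ : Measure E₁) [IsProbabilityMeasure ρ] (hac : ρ ≪ R.map B)
    (hyp : (fun ω => g₂ (π (B ω)) * (R[fun ω' => f (A ω') | mE₁.comap B]) ω)
        =ᵐ[R] fun ω => (ρ.rnDeriv (R.map B) (B ω)).toReal) :
    (fun ω => g₂ (π (B ω)) * (R[fun ω' => f (A ω') | mE₂.comap (π ∘ B)]) ω)
        =ᵐ[R] fun ω =>
          ((ρ.map π).rnDeriv (R.map (π ∘ B)) (π (B ω))).toReal := by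
  obtain ⟨C, hC⟩ := hg₂bdd
  have hσ : mE₂.comap (π ∘ B) ≤ mE₁.comap B := by
    rw [← MeasurableSpace.comap_comp]
    exact MeasurableSpace.comap_mono hπ.comap_le
  have hG : StronglyMeasurable[mE₂.comap (π ∘ B)] fun ω => g₂ (π (B ω)) :=
    (hg₂.comp (comap_measurable (π ∘ B))).stronglyMeasurable
  have hGC : ∀ ω, ‖g₂ (π (B ω))‖ ≤ C := fun ω => by
    rw [Real.norm_of_nonneg (hg₂0 _)]
    exact hC _
  calc _ =ᵐ[R] R[(fun ω => g₂ (π (B ω))) * R[fun ω => f (A ω) | mE₁.comap B] |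
          mE₂.comap (π ∘ B)] := (condExp_mul_condExp_of_le hσ hB.comap_le hG hGC hfint).symm
    _ =ᵐ[R] R[fun ω => (ρ.rnDeriv (R.map B) (B ω)).toReal | mE₂.comap (π ∘ B)] :=
          condExp_congr_ae hyp
    _ =ᵐ[R] _ := condExp_toReal_rnDeriv_map_comp R hB hπ hac

/-- If a Schrödinger-system terminal equation holds with terminal function
`g = g₂ ∘ π` factoring through the coarsening `π`, then the corresponding terminal
equation holds for the coarsened problem: `(g₂ ∘ π ∘ B) · E_R[f ∘ A | σ(π ∘ B)]`
is a version of `(d(π_#ρ)/d((π∘B)_#R)) ∘ (π ∘ B)`. -/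
theorem schroedinger_terminal_equation_coarsening
    {Ω S E₁ E₂ : Type*} {mΩ : MeasurableSpace Ω} {mS : MeasurableSpace S}
    {mE₁ : MeasurableSpace E₁} {mE₂ : MeasurableSpace E₂}
    (R : Measure Ω) [IsProbabilityMeasure R]
    (A : Ω → S) (hA : Measurable A)
    (B : Ω → E₁) (hB : Measurable B)
    (π : E₁ → E₂) (hπ : Measurable π)
    (f : S → ℝ) (hf : Measurable f) (hf0 : ∀ s, 0 ≤ f s)
    (hfint : Integrable (fun ω => f (A ω)) R)
    (g₂ : E₂ → ℝ) (hg₂ : Measurable g₂) (hg₂0 : ∀ z, 0 ≤ g₂ z)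
    (hg₂bdd : ∃ C : ℝ, ∀ z, g₂ z ≤ C)
    (ρ : Measure E₁) [IsProbabilityMeasure ρ] (hac : ρ ≪ R.map B)
    (hyp : (fun ω => g₂ (π (B ω)) * (R[fun ω' => f (A ω') | mE₁.comap B]) ω)
        =ᵐ[R] fun ω => (ρ.rnDeriv (R.map B) (B ω)).toReal) :
    (fun ω => g₂ (π (B ω)) * (R[fun ω' => f (A ω') | mE₂.comap (π ∘ B)]) ω)
        =ᵐ[R] fun ω =>
          ((ρ.map π).rnDeriv (R.map (π ∘ B)) (π (B ω))).toReal :=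
  schroedinger_terminal_equation_coarsening_general (mΩ := mΩ) R A B hB π hπ f hfint g₂ hg₂ hg₂0
    hg₂bdd ρ hac hyp
end
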